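/- arXiv:2201.06369 — 5 statements merged into one kernel-verified Lean document; each statement's English description precedes it below -/
import Mathlib

section
/- Let A = ∏ᵢ [aⁱ, bⁱ] and C = ∏ᵢ [cⁱ, dⁱ] be closed rectangles (boxes) in ℝⁿ with A ⊆ C. Then the Hausdorff distance between A and C equals (∑ᵢ max{(aⁱ − cⁱ)², (dⁱ − bⁱ)²})^{1/2}; in particular it is realized as the Euclidean distance between a vertex of C and a vertex of A. -/
/-- For nested boxes `A = ∏ᵢ [aᵢ, bᵢ] ⊆ C = ∏ᵢ [cᵢ, dᵢ]` in ℝⁿ, the Hausdorff distance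
equals `√(∑ᵢ max{(aᵢ-cᵢ)², (dᵢ-bᵢ)²})`, and it is realized as the Euclidean distance
between a vertex of `C` and a vertex of `A`. -/
theorem hausdorffDist_nested_boxes {n : ℕ} (a b c d : Fin n → ℝ)
    (hab : ∀ i, a i ≤ b i) (hca : ∀ i, c i ≤ a i) (hbd : ∀ i, b i ≤ d i)
    (A C : Set (EuclideanSpace ℝ (Fin n)))
    (hA : A = {x | ∀ i, x i ∈ Set.Icc (a i) (b i)})
    (hC : C = {x | ∀ i, x i ∈ Set.Icc (c i) (d i)}) :
    Metric.hausdorffDist A C =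
      Real.sqrt (∑ i, max ((a i - c i) ^ 2) ((d i - b i) ^ 2)) ∧
    ∃ x ∈ A, ∃ y ∈ C,
      (∀ i, (x i = a i ∨ x i = b i) ∧ (y i = c i ∨ y i = d i)) ∧
      Metric.hausdorffDist A C = dist x y := by
  have hac : ∀ i, 0 ≤ a i - c i := fun i => by linarith [hca i]
  have hdb : ∀ i, 0 ≤ d i - b i := fun i => by linarith [hbd i]
  set S := Real.sqrt (∑ i, max ((a i - c i) ^ 2) ((d i - b i) ^ 2)) with hSdef
  have hS0 : 0 ≤ S := Real.sqrt_nonneg _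
  -- the extremal vertices
  set x : EuclideanSpace ℝ (Fin n) :=
    WithLp.toLp 2 fun i => if d i - b i ≤ a i - c i then a i else b i with hxdef
  set y : EuclideanSpace ℝ (Fin n) :=
    WithLp.toLp 2 fun i => if d i - b i ≤ a i - c i then c i else d i with hydef
  have hxA : x ∈ A := by
    rw [hA]; intro i; show x i ∈ _
    rw [hxdef]; dsimp only
    split <;> constructor <;> linarith [hab i]
  have hyC : y ∈ C := by
    rw [hC]; intro i; show y i ∈ _
    rw [hydef]; dsimp only
    split <;> constructor <;> linarith [hca i, hbd i, hab i]
  -- subset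
  have hsub : A ⊆ C := by
    rw [hA, hC]; intro z hz i
    exact ⟨(hca i).trans (hz i).1, (hz i).2.trans (hbd i)⟩
  have hAne : A.Nonempty := ⟨x, hxA⟩
  have hCne : C.Nonempty := ⟨y, hyC⟩
  -- boundedness
  have hCbdd : Bornology.IsBounded C := by
    rw [Metric.isBounded_iff]
    refine ⟨Real.sqrt (∑ i, (d i - c i) ^ 2), fun u hu v hv => ?_⟩
    rw [hC] at hu hv
    rw [EuclideanSpace.dist_eq]
    apply Real.sqrt_le_sqrt
    apply Finset.sum_le_sum
    intro i _
    have h1 := hu i; have h2 := hv i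
    rw [Real.dist_eq]
    have : |u i - v i| ≤ d i - c i := by
      rw [abs_le]; constructor <;> [linarith [h1.1, h2.2]; linarith [h1.2, h2.1]]
    calc |u i - v i| ^ 2 ≤ (d i - c i) ^ 2 := by
            apply pow_le_pow_left₀ (abs_nonneg _) this
      _ = (d i - c i) ^ 2 := rfl
  have hAbdd : Bornology.IsBounded A := hCbdd.subset hsub
  have hfin : EMetric.hausdorffEdist A C ≠ ⊤ :=
    Metric.hausdorffEdist_ne_top_of_nonempty_of_bounded hAne hCne hAbdd hCbdd
  -- dist x y = S
  have hxy : dist x y = S := by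
    rw [EuclideanSpace.dist_eq, hSdef]
    congr 1
    apply Finset.sum_congr rfl
    intro i _
    rw [Real.dist_eq, sq_abs, hxdef, hydef]
    dsimp only
    split
    · next h =>
      have : (d i - b i) ^ 2 ≤ (a i - c i) ^ 2 := pow_le_pow_left₀ (hdb i) h 2
      rw [max_eq_left this]
    · next h =>
      push_neg at h
      have : (a i - c i) ^ 2 ≤ (d i - b i) ^ 2 := pow_le_pow_left₀ (hac i) h.le 2
      rw [max_eq_right this]; ring
  -- upper bound helper: projection onto A
  have hupper : Metric.hausdorffDist A C ≤ S := by
    apply Metric.hausdorffDist_le_of_mem_dist hS0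
    · intro z hz
      exact ⟨z, hsub hz, by simpa using hS0⟩
    · intro z hz
      rw [hC] at hz
      refine ⟨WithLp.toLp 2 fun i => max (a i) (min (z i) (b i)), ?_, ?_⟩
      · rw [hA]; intro i
        exact ⟨le_max_left _ _, max_le (hab i) (min_le_right _ _)⟩
      · rw [EuclideanSpace.dist_eq, hSdef]
        apply Real.sqrt_le_sqrt
        apply Finset.sum_le_sum
        intro i _
        have hz1 := (hz i).1; have hz2 := (hz i).2
        rw [Real.dist_eq, sq_abs]
        show (z i - max (a i) (min (z i) (b i))) ^ 2 ≤ _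
        rcases lt_or_ge (z i) (a i) with h | h
        · have : min (z i) (b i) = z i := min_eq_left (by linarith [hab i])
          rw [this, max_eq_left h.le]
          refine le_max_of_le_left ?_
          nlinarith [hca i]
        · rcases le_or_gt (z i) (b i) with h' | h'
          · have : min (z i) (b i) = z i := min_eq_left h'
            rw [this, max_eq_right h]
            have h0 : (z i - z i) ^ 2 = 0 := by ring
            rw [h0]; exact le_max_of_le_left (sq_nonneg _)
          · have : min (z i) (b i) = b i := min_eq_right h'.le
            rw [this, max_eq_right (hab i)]
            refine le_max_of_le_right ?_
            nlinarith [hbd i]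
  -- lower bound: every point of A is far from y
  have hkey : ∀ z ∈ A, S ≤ dist y z := by
    intro z hz
    rw [hA] at hz
    rw [EuclideanSpace.dist_eq, hSdef]
    apply Real.sqrt_le_sqrt
    apply Finset.sum_le_sum
    intro i _
    have hz1 := (hz i).1; have hz2 := (hz i).2
    rw [Real.dist_eq, sq_abs, hydef]
    dsimp only
    split
    · next h =>
      have : (d i - b i) ^ 2 ≤ (a i - c i) ^ 2 := pow_le_pow_left₀ (hdb i) h 2
      rw [max_eq_left this]
      nlinarith [hca i]
    · next h =>
      push_neg at h
      have : (a i - c i) ^ 2 ≤ (d i - b i) ^ 2 := pow_le_pow_left₀ (hac i) h.le 2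
      rw [max_eq_right this]
      nlinarith [hbd i]
  have hlower : S ≤ Metric.hausdorffDist A C := by
    by_contra hlt
    push_neg at hlt
    have hlt' : Metric.hausdorffDist C A < S := by
      rwa [Metric.hausdorffDist_comm]
    obtain ⟨z, hzA, hzd⟩ := Metric.exists_dist_lt_of_hausdorffDist_lt hyC hlt'
      (by rwa [EMetric.hausdorffEdist_comm])
    exact absurd hzd (not_lt.2 (hkey z hzA))
  have hmain : Metric.hausdorffDist A C = S := le_antisymm hupper hlower
  refine ⟨hmain, x, hxA, y, hyC, ?_, by rw [hmain, hxy]⟩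
  intro i
  rw [hxdef, hydef]
  dsimp only
  constructor <;> split <;> simp
end

section
/- Let a, m, M ∈ ℝⁿ with mⁱ ≤ aⁱ ≤ Mⁱ for all i, S = max{maxᵢ |mⁱ − aⁱ|, maxᵢ |Mⁱ − aⁱ|}, and f(t) = ∏ᵢ [(mⁱ − aⁱ)t + aⁱ, (Mⁱ − aⁱ)t + aⁱ]. Then for all t₁, t₂ ∈ [0,1], the Hausdorff distance between f(t₁) and f(t₂) is at most √n · S · |t₂ − t₁|. -/
/-- One direction: from each point of the `t₁` rectangle we can find a point of the `t₂`
rectangle within distance `√n · S · |t₂ - t₁|` (obtained by clamping coordinates). -/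
lemma rectangle_family_exists_close {n : ℕ} (a m M : Fin n → ℝ)
    (hma : ∀ i, m i ≤ a i) (haM : ∀ i, a i ≤ M i)
    (S : ℝ) (hS : S = max (⨆ i, |m i - a i|) (⨆ i, |M i - a i|))
    (t₁ t₂ : ℝ) (ht₁ : t₁ ∈ Set.Icc (0:ℝ) 1) (ht₂ : t₂ ∈ Set.Icc (0:ℝ) 1)
    (x : EuclideanSpace ℝ (Fin n))
    (hx : ∀ i, x i ∈ Set.Icc ((m i - a i) * t₁ + a i) ((M i - a i) * t₁ + a i)) :
    ∃ y ∈ {x : EuclideanSpace ℝ (Fin n) |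
        ∀ i, x i ∈ Set.Icc ((m i - a i) * t₂ + a i) ((M i - a i) * t₂ + a i)},
      dist x y ≤ Real.sqrt n * S * |t₂ - t₁| := by
  set L₂ : Fin n → ℝ := fun i => (m i - a i) * t₂ + a i with hL₂
  set U₂ : Fin n → ℝ := fun i => (M i - a i) * t₂ + a i with hU₂
  have hLU₂ : ∀ i, L₂ i ≤ U₂ i := by
    intro i
    have h1 : (m i - a i) * t₂ ≤ 0 :=
      mul_nonpos_of_nonpos_of_nonneg (by linarith [hma i]) ht₂.1
    have h2 : 0 ≤ (M i - a i) * t₂ :=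
      mul_nonneg (by linarith [haM i]) ht₂.1
    simp only [hL₂, hU₂]; linarith
  set y : EuclideanSpace ℝ (Fin n) := WithLp.toLp 2 (fun i => max (L₂ i) (min (U₂ i) (x i))) with hy
  have hSnonneg : 0 ≤ S := by
    rcases Nat.eq_zero_or_pos n with h | h
    · subst h
      simp [hS, Real.iSup_of_isEmpty]
    · have : Nonempty (Fin n) := Fin.pos_iff_nonempty.mp h
      have := le_ciSup (Set.Finite.bddAbove (Set.finite_range _))
        (Classical.arbitrary (Fin n)) (f := fun i => |m i - a i|)
      have h0 : (0:ℝ) ≤ |m (Classical.arbitrary (Fin n)) - a (Classical.arbitrary (Fin n))| :=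
        abs_nonneg _
      rw [hS]; exact le_max_of_le_left (le_trans h0 this)
  have hSi : ∀ i, max |m i - a i| |M i - a i| ≤ S := by
    intro i
    rw [hS]
    exact max_le_max
      (le_ciSup (f := fun i => |m i - a i|) (Set.Finite.bddAbove (Set.finite_range _)) i)
      (le_ciSup (f := fun i => |M i - a i|) (Set.Finite.bddAbove (Set.finite_range _)) i)
  have hcoord : ∀ i, |x i - y i| ≤ S * |t₂ - t₁| := by
    intro i
    have hxi := hx i
    have hb : |x i - y i| ≤ max (|(m i - a i) * (t₂ - t₁)|) (|(M i - a i) * (t₂ - t₁)|) := by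
      rcases le_or_gt (L₂ i) (x i) with hL | hL
      · rcases le_or_gt (x i) (U₂ i) with hU | hU
        · have : y i = x i := by
            simp only [hy, PiLp.toLp_apply, min_eq_right hU, max_eq_right hL]
          simp [this]; exact Or.inl (by positivity)
        · -- x i > U₂ i, clamp to U₂ i
          have hyi : y i = U₂ i := by
            simp only [hy, PiLp.toLp_apply, min_eq_left hU.le, max_eq_right (hLU₂ i)]
          have hxU1 : x i ≤ (M i - a i) * t₁ + a i := hxi.2
          have : |x i - y i| ≤ |(M i - a i) * (t₂ - t₁)| := by
            rw [hyi]
            rw [abs_sub_le_iff]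
            constructor
            · have : x i - U₂ i ≤ ((M i - a i) * t₁ + a i) - U₂ i := by linarith
              refine le_trans this ?_
              have : ((M i - a i) * t₁ + a i) - U₂ i = (M i - a i) * (t₁ - t₂) := by
                simp only [hU₂]; ring
              rw [this, ← abs_neg]
              have : -((M i - a i) * (t₂ - t₁)) = (M i - a i) * (t₁ - t₂) := by ring
              rw [this]; exact le_abs_self _
            · linarith [abs_nonneg ((M i - a i) * (t₂ - t₁)), hU]
          exact le_trans this (le_max_right _ _)
      · -- x i < L₂ i, clamp to L₂ i
        have hyi : y i = L₂ i := by
          have : min (U₂ i) (x i) = x i := min_eq_right (by linarith [hLU₂ i])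
          simp only [hy, PiLp.toLp_apply, this, max_eq_left hL.le]
        have hxL1 : (m i - a i) * t₁ + a i ≤ x i := hxi.1
        have : |x i - y i| ≤ |(m i - a i) * (t₂ - t₁)| := by
          rw [hyi, abs_sub_le_iff]
          constructor
          · linarith [abs_nonneg ((m i - a i) * (t₂ - t₁))]
          · have : L₂ i - x i ≤ L₂ i - ((m i - a i) * t₁ + a i) := by linarith
            refine le_trans this ?_
            have he : L₂ i - ((m i - a i) * t₁ + a i) = (m i - a i) * (t₂ - t₁) := by
              simp only [hL₂]; ring
            rw [he]; exact le_abs_self _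
        exact le_trans this (le_max_left _ _)
    refine le_trans hb ?_
    rw [abs_mul, abs_mul]
    have := hSi i
    have h1 : |m i - a i| * |t₂ - t₁| ≤ S * |t₂ - t₁| :=
      mul_le_mul_of_nonneg_right (le_trans (le_max_left _ _) this) (abs_nonneg _)
    have h2 : |M i - a i| * |t₂ - t₁| ≤ S * |t₂ - t₁| :=
      mul_le_mul_of_nonneg_right (le_trans (le_max_right _ _) this) (abs_nonneg _)
    exact max_le h1 h2
  refine ⟨y, ?_, ?_⟩
  · intro i
    constructor
    · exact le_max_left _ _
    · exact max_le (hLU₂ i) (min_le_left _ _)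
  · have hdist : dist x y = Real.sqrt (∑ i, dist (x i) (y i) ^ 2) :=
      EuclideanSpace.dist_eq x y
    rw [hdist]
    have hsum : (∑ i, dist (x i) (y i) ^ 2) ≤ (n : ℝ) * (S * |t₂ - t₁|) ^ 2 := by
      calc (∑ i, dist (x i) (y i) ^ 2) ≤ ∑ _i : Fin n, (S * |t₂ - t₁|) ^ 2 := by
            apply Finset.sum_le_sum
            intro i _
            have : dist (x i) (y i) = |x i - y i| := Real.dist_eq _ _
            rw [this]
            exact pow_le_pow_left₀ (abs_nonneg _) (hcoord i) 2
        _ = (n : ℝ) * (S * |t₂ - t₁|) ^ 2 := by simp [Finset.sum_const, mul_comm]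
    have hc : 0 ≤ S * |t₂ - t₁| := mul_nonneg hSnonneg (abs_nonneg _)
    calc Real.sqrt (∑ i, dist (x i) (y i) ^ 2)
        ≤ Real.sqrt ((n : ℝ) * (S * |t₂ - t₁|) ^ 2) := Real.sqrt_le_sqrt hsum
      _ = Real.sqrt n * (S * |t₂ - t₁|) := by
          rw [Real.sqrt_mul (Nat.cast_nonneg n), Real.sqrt_sq hc]
      _ = Real.sqrt n * S * |t₂ - t₁| := by ring

/-- Lipschitz estimate for the rectangle family: with
`S = max (maxᵢ |mᵢ - aᵢ|) (maxᵢ |Mᵢ - aᵢ|)`, for `t₁, t₂ ∈ [0,1]` the Hausdorff distance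
between `f(t₁)` and `f(t₂)` is at most `√n · S · |t₂ - t₁|`. -/
theorem rectangle_family_lipschitz {n : ℕ} (a m M : Fin n → ℝ)
    (hma : ∀ i, m i ≤ a i) (haM : ∀ i, a i ≤ M i)
    (S : ℝ) (hS : S = max (⨆ i, |m i - a i|) (⨆ i, |M i - a i|))
    (t₁ t₂ : ℝ) (ht₁ : t₁ ∈ Set.Icc (0:ℝ) 1) (ht₂ : t₂ ∈ Set.Icc (0:ℝ) 1) :
    Metric.hausdorffDist
      {x : EuclideanSpace ℝ (Fin n) |
        ∀ i, x i ∈ Set.Icc ((m i - a i) * t₁ + a i) ((M i - a i) * t₁ + a i)}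
      {x : EuclideanSpace ℝ (Fin n) |
        ∀ i, x i ∈ Set.Icc ((m i - a i) * t₂ + a i) ((M i - a i) * t₂ + a i)} ≤
      Real.sqrt n * S * |t₂ - t₁| := by
  have hSnonneg : 0 ≤ S := by
    rcases Nat.eq_zero_or_pos n with h | h
    · subst h
      simp [hS, Real.iSup_of_isEmpty]
    · have : Nonempty (Fin n) := Fin.pos_iff_nonempty.mp h
      have hle := le_ciSup (Set.Finite.bddAbove (Set.finite_range _))
        (Classical.arbitrary (Fin n)) (f := fun i => |m i - a i|)
      rw [hS]
      exact le_max_of_le_left (le_trans (abs_nonneg _) hle)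
  have hr : 0 ≤ Real.sqrt n * S * |t₂ - t₁| :=
    mul_nonneg (mul_nonneg (Real.sqrt_nonneg _) hSnonneg) (abs_nonneg _)
  apply Metric.hausdorffDist_le_of_mem_dist hr
  · intro x hx
    exact rectangle_family_exists_close a m M hma haM S hS t₁ t₂ ht₁ ht₂ x hx
  · intro y hy
    obtain ⟨x, hx, hd⟩ :=
      rectangle_family_exists_close a m M hma haM S hS t₂ t₁ ht₂ ht₁ y hy
    refine ⟨x, hx, ?_⟩
    rwa [abs_sub_comm t₁ t₂] at hd
end

section
/- Let a, a′ ∈ ℝⁿ both lie in the rectangle ∏ᵢ [mⁱ, Mⁱ], and for t ∈ [0,1] let f_a(t) = ∏ᵢ [(mⁱ − aⁱ)t + aⁱ, (Mⁱ − aⁱ)t + aⁱ] and similarly f_{a′}(t). Then the Hausdorff distance between f_a(t) and f_{a′}(t) is at most (1 − t)·d(a, a′), where d is the Euclidean distance. -/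
/-- For two points `a, a'` of the rectangle `∏ᵢ [mᵢ, Mᵢ]` and `t ∈ [0,1]`, the Hausdorff
distance between `f_a(t)` and `f_{a'}(t)` is at most `(1 - t) · d(a, a')`. -/
theorem hausdorffDist_rectangles_le {n : ℕ} (m M : Fin n → ℝ)
    (a a' : EuclideanSpace ℝ (Fin n))
    (ha : ∀ i, a i ∈ Set.Icc (m i) (M i)) (ha' : ∀ i, a' i ∈ Set.Icc (m i) (M i))
    (t : ℝ) (ht : t ∈ Set.Icc (0:ℝ) 1) :
    Metric.hausdorffDist
      {x : EuclideanSpace ℝ (Fin n) |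
        ∀ i, x i ∈ Set.Icc ((m i - a i) * t + a i) ((M i - a i) * t + a i)}
      {x : EuclideanSpace ℝ (Fin n) |
        ∀ i, x i ∈ Set.Icc ((m i - a' i) * t + a' i) ((M i - a' i) * t + a' i)} ≤
      (1 - t) * dist a a' := by
  obtain ⟨ht0, ht1⟩ := ht
  have hr : 0 ≤ (1 - t) * dist a a' :=
    mul_nonneg (by linarith) dist_nonneg
  have hdist : ∀ x : EuclideanSpace ℝ (Fin n),
      dist x (x + (1 - t) • (a' - a)) = (1 - t) * dist a a' := by
    intro x
    rw [dist_eq_norm]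
    have : x - (x + (1 - t) • (a' - a)) = -((1 - t) • (a' - a)) := by abel
    rw [this, norm_neg, norm_smul, Real.norm_eq_abs, abs_of_nonneg (by linarith),
      dist_eq_norm, ← norm_neg (a - a')]
    congr 1
    abel
  apply Metric.hausdorffDist_le_of_mem_dist hr
  · intro x hx
    refine ⟨x + (1 - t) • (a' - a), ?_, le_of_eq (hdist x)⟩
    intro i
    have hxi := hx i
    simp only [Set.mem_Icc, PiLp.add_apply, PiLp.smul_apply, PiLp.sub_apply,
      smul_eq_mul] at hxi ⊢
    constructor <;> nlinarith [hxi.1, hxi.2]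
  · intro x hx
    refine ⟨x + (1 - t) • (a - a'), ?_, ?_⟩
    · intro i
      have hxi := hx i
      simp only [Set.mem_Icc, PiLp.add_apply, PiLp.smul_apply, PiLp.sub_apply,
        smul_eq_mul] at hxi ⊢
      constructor <;> nlinarith [hxi.1, hxi.2]
    · rw [dist_eq_norm]
      have : x - (x + (1 - t) • (a - a')) = -((1 - t) • (a - a')) := by abel
      rw [this, norm_neg, norm_smul, Real.norm_eq_abs, abs_of_nonneg (by linarith),
        dist_eq_norm]
end

section
/- Let A be a nonempty compact subset of ℝⁿ contained in the rectangle R = ∏ᵢ [mⁱ, Mⁱ] with m ≠ M, and define F : [0,1] → K(ℝⁿ) by F(t) = ⋃_{a∈A} ∏ᵢ [(mⁱ − aⁱ)t + aⁱ, (Mⁱ − aⁱ)t + aⁱ]. Then F is a continuous path in the hyperspace (Hausdorff metric) with F(0) = A and F(1) = R. -/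
open TopologicalSpace Set Metric

section aux
variable {n : ℕ}

private lemma rect_compact (m M : EuclideanSpace ℝ (Fin n)) :
    IsCompact {x : EuclideanSpace ℝ (Fin n) | ∀ i, x i ∈ Set.Icc (m i) (M i)} := by
  have hs : {x : EuclideanSpace ℝ (Fin n) | ∀ i, x i ∈ Set.Icc (m i) (M i)} =
      (EuclideanSpace.equiv (Fin n) ℝ).toHomeomorph ⁻¹'
        (Set.univ.pi fun i => Set.Icc (m i) (M i)) := by
    ext x
    simp only [Set.mem_setOf_eq, Set.mem_preimage, Set.mem_univ_pi]
    exact Iff.rfl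
  rw [hs]
  exact (EuclideanSpace.equiv (Fin n) ℝ).toHomeomorph.isCompact_preimage.2
    (isCompact_univ_pi fun i => isCompact_Icc)

private lemma coord_apply (a y : EuclideanSpace ℝ (Fin n)) (t : ℝ) (i : Fin n) :
    (a + t • (y - a)) i = a i + t * (y i - a i) := rfl

private lemma box_image_eq (m M : EuclideanSpace ℝ (Fin n)) (hmM : ∀ i, m i ≤ M i)
    (A : Set (EuclideanSpace ℝ (Fin n))) (t : ℝ) (ht : 0 ≤ t) :
    (fun p : EuclideanSpace ℝ (Fin n) × EuclideanSpace ℝ (Fin n) => p.1 + t • (p.2 - p.1)) ''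
      (A ×ˢ {x | ∀ i, x i ∈ Set.Icc (m i) (M i)}) =
    ⋃ a ∈ A, {x : EuclideanSpace ℝ (Fin n) |
      ∀ i, x i ∈ Set.Icc ((m i - a i) * t + a i) ((M i - a i) * t + a i)} := by
  ext x
  simp only [Set.mem_image, Set.mem_prod, Set.mem_setOf_eq, Set.mem_iUnion, Set.mem_Icc,
    Prod.exists]
  constructor
  · rintro ⟨a, y, ⟨ha, hy⟩, rfl⟩
    refine ⟨a, ha, fun i => ?_⟩
    have h1 := (hy i).1
    have h2 := (hy i).2
    rw [coord_apply]
    constructor <;> nlinarith [mul_le_mul_of_nonneg_left h1 ht,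
      mul_le_mul_of_nonneg_left h2 ht]
  · rintro ⟨a, ha, hx⟩
    rcases eq_or_lt_of_le ht with h0 | h0
    · have hxa : x = a := by
        refine PiLp.ext fun i => ?_
        have := hx i
        rw [← h0] at this
        simp at this
        linarith [this.1, this.2]
      refine ⟨a, m, ⟨ha, fun i => ⟨le_refl _, hmM i⟩⟩, ?_⟩
      rw [← h0, hxa]; simp
    · have htne : t ≠ 0 := ne_of_gt h0
      have hinv : 0 < t⁻¹ := inv_pos.2 h0
      refine ⟨a, a + t⁻¹ • (x - a), ⟨ha, fun i => ?_⟩, ?_⟩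
      · rw [coord_apply]
        have h1 := (hx i).1
        have h2 := (hx i).2
        have h1' : t * (m i - a i) ≤ x i - a i := by linarith
        have h2' : x i - a i ≤ t * (M i - a i) := by linarith
        have h1'' := mul_le_mul_of_nonneg_left h1' hinv.le
        have h2'' := mul_le_mul_of_nonneg_left h2' hinv.le
        rw [← mul_assoc, inv_mul_cancel₀ htne, one_mul] at h1''
        rw [← mul_assoc, inv_mul_cancel₀ htne, one_mul] at h2''
        constructor <;> linarith
      · have hv : a + t⁻¹ • (x - a) - a = t⁻¹ • (x - a) := by abel
        rw [hv, smul_smul, mul_inv_cancel₀ htne, one_smul]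
        abel

end aux

/-- For a nonempty compact `A` contained in the rectangle `R = ∏ᵢ [mᵢ, Mᵢ]` with `m ≠ M`,
the map `F(t) = ⋃_{a∈A} ∏ᵢ [(mᵢ-aᵢ)t + aᵢ, (Mᵢ-aᵢ)t + aᵢ]` is a continuous path in the
hyperspace (Hausdorff metric) from `A` to `R`. -/
theorem compact_to_rectangle_path {n : ℕ} (m M : EuclideanSpace ℝ (Fin n))
    (hmM : ∀ i, m i ≤ M i) (hne' : m ≠ M)
    (A : Set (EuclideanSpace ℝ (Fin n))) (hA : IsCompact A) (hne : A.Nonempty)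
    (hsub : A ⊆ {x | ∀ i, x i ∈ Set.Icc (m i) (M i)}) :
    ∃ g : Set.Icc (0:ℝ) 1 → NonemptyCompacts (EuclideanSpace ℝ (Fin n)),
      (∀ t : Set.Icc (0:ℝ) 1, (g t : Set (EuclideanSpace ℝ (Fin n))) =
        ⋃ a ∈ A, {x : EuclideanSpace ℝ (Fin n) |
          ∀ i, x i ∈ Set.Icc ((m i - a i) * (t : ℝ) + a i) ((M i - a i) * (t : ℝ) + a i)}) ∧
      Continuous g ∧
      (g ⟨0, by norm_num⟩ : Set (EuclideanSpace ℝ (Fin n))) = A ∧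
      (g ⟨1, by norm_num⟩ : Set (EuclideanSpace ℝ (Fin n))) =
        {x | ∀ i, x i ∈ Set.Icc (m i) (M i)} := by
  have hRc : IsCompact {x : EuclideanSpace ℝ (Fin n) | ∀ i, x i ∈ Set.Icc (m i) (M i)} :=
    rect_compact m M
  have hRne : Set.Nonempty {x : EuclideanSpace ℝ (Fin n) | ∀ i, x i ∈ Set.Icc (m i) (M i)} :=
    ⟨m, fun i => ⟨le_refl _, hmM i⟩⟩
  have hKc : IsCompact (A ×ˢ {x : EuclideanSpace ℝ (Fin n) | ∀ i, x i ∈ Set.Icc (m i) (M i)}) :=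
    hA.prod hRc
  have hKne : (A ×ˢ {x : EuclideanSpace ℝ (Fin n) |
      ∀ i, x i ∈ Set.Icc (m i) (M i)}).Nonempty := hne.prod hRne
  have hfc : ∀ t : ℝ, Continuous (fun p : EuclideanSpace ℝ (Fin n) × EuclideanSpace ℝ (Fin n) =>
      p.1 + t • (p.2 - p.1)) := fun t =>
    continuous_fst.add ((continuous_snd.sub continuous_fst).const_smul t)
  obtain ⟨C, hC0, hC⟩ : ∃ C, 0 ≤ C ∧ ∀ p ∈ (A ×ˢ {x : EuclideanSpace ℝ (Fin n) |
      ∀ i, x i ∈ Set.Icc (m i) (M i)}), ‖p.2 - p.1‖ ≤ C := by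
    obtain ⟨C, hC⟩ := hKc.exists_bound_of_continuousOn
      ((continuous_snd.sub continuous_fst).continuousOn)
    refine ⟨max C 0, le_max_right _ _, fun p hp => le_trans ?_ (le_max_left _ _)⟩
    simpa using hC p hp
  refine ⟨fun t => ⟨⟨(fun p : EuclideanSpace ℝ (Fin n) × EuclideanSpace ℝ (Fin n) =>
      p.1 + (t : ℝ) • (p.2 - p.1)) '' (A ×ˢ {x : EuclideanSpace ℝ (Fin n) |
      ∀ i, x i ∈ Set.Icc (m i) (M i)}), hKc.image (hfc t)⟩, hKne.image _⟩, ?_, ?_, ?_, ?_⟩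
  · intro t
    exact box_image_eq m M hmM A t t.2.1
  · have key : ∀ s t : Set.Icc (0:ℝ) 1, ∀ x ∈ (fun p : EuclideanSpace ℝ (Fin n) ×
        EuclideanSpace ℝ (Fin n) => p.1 + (s : ℝ) • (p.2 - p.1)) '' (A ×ˢ
        {x : EuclideanSpace ℝ (Fin n) | ∀ i, x i ∈ Set.Icc (m i) (M i)}),
        ∃ y ∈ (fun p : EuclideanSpace ℝ (Fin n) × EuclideanSpace ℝ (Fin n) =>
          p.1 + (t : ℝ) • (p.2 - p.1)) '' (A ×ˢ
          {x : EuclideanSpace ℝ (Fin n) | ∀ i, x i ∈ Set.Icc (m i) (M i)}),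
        dist x y ≤ C * dist s t := by
      rintro s t x ⟨p, hp, rfl⟩
      refine ⟨_, Set.mem_image_of_mem _ hp, ?_⟩
      have hd : (p.1 + (s : ℝ) • (p.2 - p.1)) - (p.1 + (t : ℝ) • (p.2 - p.1)) =
          ((s : ℝ) - (t : ℝ)) • (p.2 - p.1) := by module
      rw [dist_eq_norm, hd, norm_smul, Real.norm_eq_abs, Subtype.dist_eq, Real.dist_eq,
        mul_comm]
      exact mul_le_mul (hC p hp) le_rfl (abs_nonneg _) hC0
    apply (LipschitzWith.of_dist_le_mul (K := C.toNNReal) ?_).continuous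
    intro s t
    rw [NonemptyCompacts.dist_eq]
    simp only [Real.coe_toNNReal C hC0]
    refine hausdorffDist_le_of_mem_dist (mul_nonneg hC0 dist_nonneg) (key s t) ?_
    intro y hy
    obtain ⟨x, hx, hd⟩ := key t s y hy
    exact ⟨x, hx, by rwa [dist_comm t s] at hd⟩
  · show (fun p : EuclideanSpace ℝ (Fin n) × EuclideanSpace ℝ (Fin n) =>
        p.1 + (0:ℝ) • (p.2 - p.1)) '' (A ×ˢ {x : EuclideanSpace ℝ (Fin n) |
        ∀ i, x i ∈ Set.Icc (m i) (M i)}) = A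
    rw [box_image_eq m M hmM A 0 le_rfl]
    ext x
    simp only [Set.mem_iUnion, Set.mem_setOf_eq, Set.mem_Icc, mul_zero, zero_add]
    constructor
    · rintro ⟨a, ha, hx⟩
      have : x = a := PiLp.ext fun i => le_antisymm (hx i).2 (hx i).1
      rwa [this]
    · intro hx
      exact ⟨x, hx, fun i => ⟨le_refl _, le_refl _⟩⟩
  · show (fun p : EuclideanSpace ℝ (Fin n) × EuclideanSpace ℝ (Fin n) =>
        p.1 + (1:ℝ) • (p.2 - p.1)) '' (A ×ˢ {x : EuclideanSpace ℝ (Fin n) |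
        ∀ i, x i ∈ Set.Icc (m i) (M i)}) = {x | ∀ i, x i ∈ Set.Icc (m i) (M i)}
    rw [box_image_eq m M hmM A 1 zero_le_one]
    ext x
    simp only [Set.mem_iUnion, Set.mem_setOf_eq, Set.mem_Icc, mul_one, sub_add_cancel]
    exact ⟨fun ⟨a, _, hx⟩ => hx, fun hx => ⟨hne.choose, hne.choose_spec, hx⟩⟩
end

section
/- If nested families of boxes w ⊆ W in ℝⁿ are given by w = ∏ᵢ [qⁱ, rⁱ] and W = ∏ᵢ [Qⁱ, Rⁱ] with Qⁱ ≤ qⁱ ≤ rⁱ ≤ Rⁱ, and S₁, S₂ are any sets with w ⊆ S₁ ∩ S₂ and S₁ ∪ S₂ ⊆ W, then the Hausdorff distance between S₁ and S₂ is at most the Hausdorff distance between w and W. -/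
/-- If `w = ∏ᵢ [qᵢ, rᵢ] ⊆ W = ∏ᵢ [Qᵢ, Rᵢ]` are nested boxes and `S₁, S₂` are sets with
`w ⊆ S₁ ∩ S₂` and `S₁ ∪ S₂ ⊆ W`, then `h(S₁, S₂) ≤ h(w, W)`. -/
theorem hausdorffDist_between_nested_boxes {n : ℕ} (q r Q R : Fin n → ℝ)
    (hQq : ∀ i, Q i ≤ q i) (hqr : ∀ i, q i ≤ r i) (hrR : ∀ i, r i ≤ R i)
    (w W : Set (EuclideanSpace ℝ (Fin n)))
    (hw : w = {x | ∀ i, x i ∈ Set.Icc (q i) (r i)})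
    (hW : W = {x | ∀ i, x i ∈ Set.Icc (Q i) (R i)})
    (S₁ S₂ : Set (EuclideanSpace ℝ (Fin n)))
    (h₁ : w ⊆ S₁ ∩ S₂) (h₂ : S₁ ∪ S₂ ⊆ W) :
    Metric.hausdorffDist S₁ S₂ ≤ Metric.hausdorffDist w W := by
  -- w is compact and nonempty, W is compact
  have e := EuclideanSpace.equiv (Fin n) ℝ
  have hwc : IsCompact w := by
    have : w = (EuclideanSpace.equiv (Fin n) ℝ) ⁻¹'
        (Set.univ.pi fun i => Set.Icc (q i) (r i)) := by
      rw [hw]; ext x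
      simp only [Set.mem_setOf_eq, Set.mem_preimage, Set.mem_pi, Set.mem_univ,
        true_implies]
      exact Iff.rfl
    rw [this]
    exact (EuclideanSpace.equiv (Fin n) ℝ).toHomeomorph.isCompact_preimage.mpr
      (isCompact_univ_pi fun i => isCompact_Icc)
  have hWc : IsCompact W := by
    have : W = (EuclideanSpace.equiv (Fin n) ℝ) ⁻¹'
        (Set.univ.pi fun i => Set.Icc (Q i) (R i)) := by
      rw [hW]; ext x
      simp only [Set.mem_setOf_eq, Set.mem_preimage, Set.mem_pi, Set.mem_univ,
        true_implies]
      exact Iff.rfl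
    rw [this]
    exact (EuclideanSpace.equiv (Fin n) ℝ).toHomeomorph.isCompact_preimage.mpr
      (isCompact_univ_pi fun i => isCompact_Icc)
  have hwne : w.Nonempty := by
    refine ⟨(EuclideanSpace.equiv (Fin n) ℝ).symm q, ?_⟩
    rw [hw]
    intro i
    exact Set.mem_Icc.mpr ⟨le_rfl, hqr i⟩
  have hWne : W.Nonempty := hwne.mono (fun x hx => by
    rw [hw] at hx; rw [hW]; exact fun i => ⟨le_trans (hQq i) (hx i).1,
      le_trans (hx i).2 (hrR i)⟩)
  have hne : EMetric.hausdorffEdist w W ≠ ⊤ :=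
    Metric.hausdorffEdist_ne_top_of_nonempty_of_bounded hwne hWne
      hwc.isBounded hWc.isBounded
  have hne' : EMetric.hausdorffEdist W w ≠ ⊤ := by
    exact Metric.hausdorffEdist_ne_top_of_nonempty_of_bounded hWne hwne
      hWc.isBounded hwc.isBounded
  have key : ∀ x ∈ W, ∃ y ∈ w, dist x y ≤ Metric.hausdorffDist w W := by
    intro x hx
    obtain ⟨y, hy, hdy⟩ := hwc.exists_infDist_eq_dist hwne x
    refine ⟨y, hy, ?_⟩
    rw [← hdy]
    calc Metric.infDist x w ≤ Metric.hausdorffDist W w :=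
          Metric.infDist_le_hausdorffDist_of_mem hx hne'
      _ = Metric.hausdorffDist w W := Metric.hausdorffDist_comm
  exact Metric.hausdorffDist_le_of_mem_dist Metric.hausdorffDist_nonneg
    (fun x hx => by
      obtain ⟨y, hy, hd⟩ := key x (h₂ (Or.inl hx))
      exact ⟨y, (h₁ hy).2, hd⟩)
    (fun x hx => by
      obtain ⟨y, hy, hd⟩ := key x (h₂ (Or.inr hx))
      exact ⟨y, (h₁ hy).1, hd⟩)
end
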